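/- Let A and Q(A) be matrices of the same size with Q(A) = A - ε. If σ_max(ε) ≤ σ_max(A)/2 (so that σ_max(A)/2 ≤ σ_max(A) - σ_max(ε)) and A ≠ 0, then sqrt(SR(Q(A))) ≤ 2·(sqrt(SR(A)) + ‖ε‖_F/σ_max(A)), where SR(M) = ‖M‖_F² / σ_max(M)² denotes the stable rank. -/

import Mathlib

/-- Frobenius norm of a real matrix: the ℓ² norm of all entries. -/
noncomputable def frob {m n : ℕ} (M : Matrix (Fin m) (Fin n) ℝ) : ℝ :=
  Real.sqrt (∑ i, ∑ j, (M i j) ^ 2)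

/-- Largest singular value (operator 2-norm) of a real matrix. -/
noncomputable def sMax {m n : ℕ} (M : Matrix (Fin m) (Fin n) ℝ) : ℝ :=
  ‖(Matrix.toEuclideanLin M).toContinuousLinearMap‖

/-- Stable rank of a matrix. -/
noncomputable def SR {m n : ℕ} (M : Matrix (Fin m) (Fin n) ℝ) : ℝ :=
  frob M ^ 2 / sMax M ^ 2

lemma frob_eq_norm {m n : ℕ} (M : Matrix (Fin m) (Fin n) ℝ) :
    frob M = ‖(WithLp.equiv 2 ((Fin m × Fin n) → ℝ)).symm (fun p => M p.1 p.2)‖ := by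
  rw [EuclideanSpace.norm_eq, frob, Fintype.sum_prod_type]
  congr 1
  refine Finset.sum_congr rfl fun i _ => Finset.sum_congr rfl fun j _ => ?_
  simp [Real.norm_eq_abs, sq_abs]

lemma frob_nonneg {m n : ℕ} (M : Matrix (Fin m) (Fin n) ℝ) : 0 ≤ frob M :=
  Real.sqrt_nonneg _

lemma frob_sub_le {m n : ℕ} (A B : Matrix (Fin m) (Fin n) ℝ) :
    frob (A - B) ≤ frob A + frob B := by
  rw [frob_eq_norm, frob_eq_norm, frob_eq_norm]
  have : (WithLp.equiv 2 ((Fin m × Fin n) → ℝ)).symm (fun p => (A - B) p.1 p.2)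
      = (WithLp.equiv 2 ((Fin m × Fin n) → ℝ)).symm (fun p => A p.1 p.2)
        - (WithLp.equiv 2 ((Fin m × Fin n) → ℝ)).symm (fun p => B p.1 p.2) := by
    simp [WithLp.toLp_sub]
    rfl
  rw [this]
  exact norm_sub_le _ _

lemma sMax_nonneg {m n : ℕ} (M : Matrix (Fin m) (Fin n) ℝ) : 0 ≤ sMax M :=
  norm_nonneg _

lemma sMax_pos {m n : ℕ} {M : Matrix (Fin m) (Fin n) ℝ} (h : M ≠ 0) : 0 < sMax M := by
  rw [sMax, norm_pos_iff]
  intro hc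
  apply h
  have h1 : Matrix.toEuclideanLin M = 0 :=
    (map_eq_zero_iff _ LinearMap.toContinuousLinearMap.injective).mp hc
  simpa using (map_eq_zero_iff _ (Matrix.toEuclideanLin (𝕜 := ℝ)).injective).mp h1

lemma sMax_sub_ge {m n : ℕ} (A B : Matrix (Fin m) (Fin n) ℝ) :
    sMax A - sMax B ≤ sMax (A - B) := by
  have h : (Matrix.toEuclideanLin (A - B)).toContinuousLinearMap
      = (Matrix.toEuclideanLin A).toContinuousLinearMap
        - (Matrix.toEuclideanLin B).toContinuousLinearMap := by
    rw [map_sub]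
    rfl
  simp only [sMax]
  rw [h]
  exact norm_sub_norm_le _ _

lemma sqrt_SR_eq {m n : ℕ} (M : Matrix (Fin m) (Fin n) ℝ) :
    Real.sqrt (SR M) = frob M / sMax M := by
  rw [SR, Real.sqrt_div (sq_nonneg _), Real.sqrt_sq (frob_nonneg M),
    Real.sqrt_sq (sMax_nonneg M)]

theorem stable_rank_quantization_upper
    {m n : ℕ} (A ε : Matrix (Fin m) (Fin n) ℝ)
    (hA : A ≠ 0) (hQ : A - ε ≠ 0)
    (hε : sMax ε ≤ sMax A / 2) :
    Real.sqrt (SR (A - ε)) ≤ 2 * (Real.sqrt (SR A) + frob ε / sMax A) := by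
  have hApos := sMax_pos hA
  have hQpos := sMax_pos hQ
  have hlow : sMax A / 2 ≤ sMax (A - ε) := by
    have := sMax_sub_ge A ε
    linarith
  rw [sqrt_SR_eq, sqrt_SR_eq]
  have h1 : frob (A - ε) / sMax (A - ε) ≤ (frob A + frob ε) / (sMax A / 2) :=
    div_le_div₀ (add_nonneg (frob_nonneg _) (frob_nonneg _)) (frob_sub_le A ε) (by linarith) hlow
  calc frob (A - ε) / sMax (A - ε) ≤ (frob A + frob ε) / (sMax A / 2) := h1
    _ = 2 * (frob A / sMax A + frob ε / sMax A) := by field_simp
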